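/- Under the assumptions of the existence theorem (F stable, τ lower semicontinuous along set limits), the function α ↦ τ^α := min{τ(A) : A ∈ F, μ(A) ≥ 1−α} is non-increasing and right continuous on (0,1). -/

import Mathlib

open Set Metric Filter MeasureTheory ENNReal Topology

def nbh {E : Type*} [MetricSpace E] (B : Set E) (ε : ℝ) : Set E :=
  {x | ∃ y ∈ B, dist x y < ε}

def setLim {E : Type*} [MetricSpace E] (B : ℕ → Set E) : Set E :=
  ⋂ ε > (0 : ℝ), ⋃ k : ℕ, ⋂ n, ⋂ _ : n ≥ k, nbh (B n) ε

def StableClass {E : Type*} [MetricSpace E] (F : Set (Set E)) : Prop :=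
  Set.univ ∈ F ∧
    ∀ B : ℕ → Set E, (∀ n, B n ∈ F) →
      ∃ φ : ℕ → ℕ, StrictMono φ ∧ setLim (B ∘ φ) ∈ F

/-
Enlarging α enlarges the family of admissible sets, so τ^α is non-increasing. For right
continuity take αₙ ↓ α and admissible Bₙ with τ(Bₙ) = τ^{αₙ}. Separability and the
compactness of [0,∞]^ℕ give a subsequence along which the distances from each point of a dense
sequence to Bₙ converge; along it, and along every further subsequence, points lying in
infinitely many Bₙ lie in the set limit. Stability then yields a further subsequence whose
limit A belongs to F, so μ(A) ≥ μ(limsup Bₙ) ≥ limsup μ(Bₙ) ≥ 1 - α, and lower semicontinuity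
gives τ^α ≤ τ(A) ≤ sup_{β > α} τ^β.
-/

theorem limsup_measure_le_measure_limsup {Ω : Type*} [MeasurableSpace Ω] (μ : Measure Ω)
    [IsFiniteMeasure μ] {s : ℕ → Set Ω} (hs : ∀ n, NullMeasurableSet (s n) μ) :
    limsup (fun n => μ (s n)) atTop ≤ μ (limsup s atTop) := by
  have hanti : Antitone fun k => ⋃ n ≥ k, s n := fun j k hjk =>
    biUnion_mono (fun n hn => le_trans hjk hn) fun _ _ => subset_rfl
  rw [limsup_eq_iInf_iSup_of_nat, limsup_eq_iInf_iSup_of_nat]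
  simp only [iSup_eq_iUnion, iInf_eq_iInter]
  rw [hanti.measure_iInter (fun k => .biUnion (to_countable _) fun n _ => hs n)
    ⟨0, measure_ne_top μ _⟩]
  exact iInf_mono fun k => iSup₂_le fun n hn => measure_mono (subset_biUnion_of_mem hn)

theorem limsup_comp_subset_limsup {α : Type*} {B : ℕ → Set α} {φ : ℕ → ℕ} (hφ : StrictMono φ) :
    limsup (B ∘ φ) atTop ⊆ limsup B atTop := by
  rw [limsup_comp]
  exact limsup_le_limsup_of_le hφ.tendsto_atTop

section SetLim

variable {E : Type*} [MetricSpace E]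

theorem nbh_eq_thickening (B : Set E) (ε : ℝ) : nbh B ε = thickening ε B := by
  ext x
  simp [nbh, mem_thickening_iff]

theorem mem_setLim_iff {B : ℕ → Set E} {x : E} :
    x ∈ setLim B ↔ ∀ ε > 0, ∀ᶠ n in atTop, x ∈ thickening ε (B n) := by
  simp [setLim, nbh_eq_thickening, eventually_atTop]

theorem setLim_subset_setLim_comp {B : ℕ → Set E} {φ : ℕ → ℕ} (hφ : StrictMono φ) :
    setLim B ⊆ setLim (B ∘ φ) := fun _ hx =>
  mem_setLim_iff.2 fun ε hε => hφ.tendsto_atTop.eventually (mem_setLim_iff.1 hx ε hε)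

theorem limsup_subset_setLim_of_tendsto_infEDist {B : ℕ → Set E} {u : ℕ → E} (hu : DenseRange u)
    (hB : ∀ i, ∃ r, Tendsto (fun n => infEDist (u i) (B n)) atTop (𝓝 r)) :
    limsup B atTop ⊆ setLim B := by
  intro x hx
  rw [mem_limsup_iff_frequently_mem] at hx
  refine mem_setLim_iff.2 fun ε hε => ?_
  set δ := ENNReal.ofReal ε / 3
  have hδ : 0 < δ := ENNReal.div_pos (ofReal_pos.2 hε).ne' ofNat_ne_top
  have hδtop : δ ≠ ∞ := (ENNReal.div_lt_top ofReal_ne_top three_ne_zero).ne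
  obtain ⟨_, ⟨i, rfl⟩, hi⟩ := EMetric.mem_closure_iff.1 (hu x) δ hδ
  obtain ⟨r, hr⟩ := hB i
  have hrδ : r ≤ δ := le_of_tendsto_of_frequently hr <| hx.mono fun n hn =>
    (infEDist_le_edist_of_mem hn).trans (edist_comm (u i) x ▸ hi.le)
  filter_upwards [hr.eventually_lt_const (hrδ.trans_lt (ENNReal.lt_add_right hδtop hδ.ne'))]
    with n hn
  rw [mem_thickening_iff_infEDist_lt, ← ENNReal.add_thirds (ENNReal.ofReal ε), add_assoc]
  calc infEDist x (B n) ≤ edist x (u i) + infEDist (u i) (B n) := infEDist_le_edist_add_infEDist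
    _ < δ + (δ + δ) := ENNReal.add_lt_add hi hn

theorem exists_strictMono_limsup_subset_setLim [TopologicalSpace.SeparableSpace E]
    (B : ℕ → Set E) : ∃ ψ : ℕ → ℕ, StrictMono ψ ∧ limsup (B ∘ ψ) atTop ⊆ setLim (B ∘ ψ) := by
  cases isEmpty_or_nonempty E
  · exact ⟨id, strictMono_id, fun x => isEmptyElim x⟩
  obtain ⟨u, hu⟩ := TopologicalSpace.exists_dense_seq E
  obtain ⟨r, ψ, hψ, hr⟩ :=
    CompactSpace.tendsto_subseq (X := ℕ → ℝ≥0∞) fun n i => infEDist (u i) (B n)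
  exact ⟨ψ, hψ, limsup_subset_setLim_of_tendsto_infEDist hu fun i =>
    ⟨r i, tendsto_pi_nhds.1 hr i⟩⟩

theorem StableClass.exists_strictMono_setLim_mem [TopologicalSpace.SeparableSpace E]
    {F : Set (Set E)} (hF : StableClass F) {B : ℕ → Set E} (hB : ∀ n, B n ∈ F) :
    ∃ φ : ℕ → ℕ, StrictMono φ ∧ setLim (B ∘ φ) ∈ F ∧ limsup (B ∘ φ) atTop ⊆ setLim (B ∘ φ) := by
  obtain ⟨ψ, hψ, hψB⟩ := exists_strictMono_limsup_subset_setLim B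
  obtain ⟨σ, hσ, hσF⟩ := hF.2 (B ∘ ψ) fun n => hB (ψ n)
  exact ⟨ψ ∘ σ, hψ.comp hσ, hσF, (limsup_comp_subset_limsup hσ).trans <|
    hψB.trans (setLim_subset_setLim_comp hσ)⟩

end SetLim

theorem StableClass.exists_mem_le_of_tendsto {E : Type*} [MetricSpace E]
    [TopologicalSpace.SeparableSpace E] [MeasurableSpace E] [BorelSpace E] {μ : Measure E}
    [IsFiniteMeasure μ] {F : Set (Set E)} (hFclosed : ∀ A ∈ F, IsClosed A) (hF : StableClass F)
    {τ : Set E → ℝ≥0∞}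
    (hlsc : ∀ A : ℕ → Set E, (∀ n, A n ∈ F) → τ (setLim A) ≤ liminf (fun n => τ (A n)) atTop)
    {B : ℕ → Set E} (hB : ∀ n, B n ∈ F) {r : ℕ → ℝ≥0∞} {m c : ℝ≥0∞}
    (hr : Tendsto r atTop (𝓝 m)) (hμ : ∀ n, r n ≤ μ (B n)) (hτ : ∀ n, τ (B n) ≤ c) :
    ∃ A ∈ F, m ≤ μ A ∧ τ A ≤ c := by
  obtain ⟨φ, hφ, hφF, hφB⟩ := hF.exists_strictMono_setLim_mem hB
  refine ⟨setLim (B ∘ φ), hφF, ?_, ?_⟩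
  · calc m = limsup (fun n => r (φ n)) atTop := ((hr.comp hφ.tendsto_atTop).limsup_eq).symm
      _ ≤ limsup (fun n => μ (B (φ n))) atTop := limsup_le_limsup (.of_forall fun n => hμ _)
      _ ≤ μ (limsup (B ∘ φ) atTop) := limsup_measure_le_measure_limsup μ fun n =>
          (hFclosed _ (hB (φ n))).measurableSet.nullMeasurableSet
      _ ≤ μ (setLim (B ∘ φ)) := measure_mono hφB
  · exact (hlsc _ fun n => hB (φ n)).trans <|
      liminf_le_of_frequently_le' (.of_forall fun n => hτ (φ n))

theorem AntitoneOn.continuousWithinAt_Ioi_of_le_iSup {α β : Type*} [LinearOrder α]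
    [TopologicalSpace α] [OrderTopology α] [CompleteLinearOrder β] [TopologicalSpace β]
    [OrderTopology β] {f : α → β} {a b x : α} (hf : AntitoneOn f (Ioo a b)) (hx : x ∈ Ioo a b)
    (hsup : f x ≤ ⨆ y ∈ Ioo x b, f y) : ContinuousWithinAt f (Ioi x) x := by
  refine tendsto_order.2 ⟨fun c hc => ?_, fun c hc => ?_⟩
  · obtain ⟨y, hy, hcy⟩ : ∃ y ∈ Ioo x b, c < f y := by
      simpa only [lt_iSup_iff, exists_prop] using hc.trans_le hsup
    filter_upwards [Ioo_mem_nhdsGT hy.1] with z hz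
    exact hcy.trans_le (hf ⟨hx.1.trans hz.1, hz.2.trans hy.2⟩ ⟨hx.1.trans hy.1, hy.2⟩ hz.2.le)
  · filter_upwards [Ioo_mem_nhdsGT hx.2] with z hz
    exact (hf hx ⟨hx.1.trans hz.1, hz.2⟩ hz.1.le).trans_lt hc

theorem tau_alpha_antitone_rightContinuous_general
    {E : Type*} [MetricSpace E] [TopologicalSpace.SeparableSpace E]
    [MeasurableSpace E] [BorelSpace E]
    (μ : Measure E) [IsProbabilityMeasure μ]
    (F : Set (Set E)) (hFclosed : ∀ A ∈ F, IsClosed A) (hFstable : StableClass F)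
    (τ : Set E → ℝ≥0∞)
    (hlsc : ∀ A : ℕ → Set E, (∀ n, A n ∈ F) →
      τ (setLim A) ≤ Filter.liminf (fun n => τ (A n)) atTop)
    (tα : ℝ → ℝ≥0∞)
    (htα : ∀ α ∈ Ioo (0 : ℝ) 1,
      tα α = sInf (τ '' {A | A ∈ F ∧ ENNReal.ofReal (1 - α) ≤ μ A}))
    (hattain : ∀ α ∈ Ioo (0 : ℝ) 1,
      ∃ B ∈ F, ENNReal.ofReal (1 - α) ≤ μ B ∧ τ B = tα α) :
    AntitoneOn tα (Ioo (0 : ℝ) 1) ∧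
      ∀ α ∈ Ioo (0 : ℝ) 1, ContinuousWithinAt tα (Ioi α) α := by
  have hanti : AntitoneOn tα (Ioo 0 1) := fun a ha b hb hab => by
    rw [htα a ha, htα b hb]
    exact sInf_le_sInf <| image_mono fun A hA =>
      ⟨hA.1, (ofReal_le_ofReal (by linarith)).trans hA.2⟩
  refine ⟨hanti, fun α hα => hanti.continuousWithinAt_Ioi_of_le_iSup hα ?_⟩
  obtain ⟨a, -, ha, hlim⟩ := exists_seq_strictAnti_tendsto' hα.2
  choose B hBF hBμ hBτ using fun n => hattain (a n) ⟨hα.1.trans (ha n).1, (ha n).2⟩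
  obtain ⟨A, hAF, hAμ, hAτ⟩ := hFstable.exists_mem_le_of_tendsto hFclosed hlsc hBF
    (ENNReal.tendsto_ofReal (tendsto_const_nhds.sub hlim)) hBμ
    fun n => (hBτ n).trans_le (le_iSup₂ (f := fun β _ => tα β) (a n) (ha n))
  rw [htα α hα]
  exact sInf_le_of_le ⟨A, ⟨hAF, hAμ⟩, rfl⟩ hAτ

theorem tau_alpha_antitone_rightContinuous
    {E : Type*} [MetricSpace E] [TopologicalSpace.SeparableSpace E] [CompleteSpace E]
    [MeasurableSpace E] [BorelSpace E]
    (μ : Measure E) [IsProbabilityMeasure μ]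
    (F : Set (Set E)) (hFclosed : ∀ A ∈ F, IsClosed A) (hFstable : StableClass F)
    (τ : Set E → ℝ≥0∞)
    (hlsc : ∀ A : ℕ → Set E, (∀ n, A n ∈ F) →
      τ (setLim A) ≤ Filter.liminf (fun n => τ (A n)) atTop)
    (tα : ℝ → ℝ≥0∞)
    (htα : ∀ α ∈ Ioo (0 : ℝ) 1,
      tα α = sInf (τ '' {A | A ∈ F ∧ ENNReal.ofReal (1 - α) ≤ μ A}))
    (hattain : ∀ α ∈ Ioo (0 : ℝ) 1,
      ∃ B ∈ F, ENNReal.ofReal (1 - α) ≤ μ B ∧ τ B = tα α) :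
    AntitoneOn tα (Ioo (0 : ℝ) 1) ∧
      ∀ α ∈ Ioo (0 : ℝ) 1, ContinuousWithinAt tα (Ioi α) α :=
  tau_alpha_antitone_rightContinuous_general μ F hFclosed hFstable τ hlsc tα htα hattain
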